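/- Let K ⊂ T be nonempty compact with positive first coordinates and B = max{b:(a,b)∈K}. Define F: ℝ → ℝ by F(θ) = max_{(a,b)∈K} ab for θ ≤ 0, F(θ) = max_{(a,b)∈K}{ab + θ(b−a)} for θ ∈ [0,B], and F(θ) = θ² for θ ≥ B. Then F is convex on ℝ. -/

import Mathlib

/-!
`F` is the pointwise maximum of three convex functions: the constant `m(0)`, the function
`m(θ) = max_{(a,b) ∈ K} (ab + θ(b - a))`, a supremum of affine functions, and the function that
equals `θ²` for `θ ≥ B` and the tangent line `2Bθ - B²` of `θ²` at `B` for `θ ≤ B`.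
Since `b - a ≥ 0` on `K`, `m` is monotone, so it dominates the constant on `[0, B]` and is dominated
by it on `θ ≤ 0`. A point `(a, B) ∈ K` gives `m(θ) ≥ aB + θ(B - a) ≥ 2Bθ - B²` for `θ ≤ B`, while
`ab + θ(b - a) ≤ θ²` (that is, `(θ + a)(θ - b) ≥ 0`) gives `m(θ) ≤ θ²` for `θ ≥ B`.
-/

/-- The triangle `T = {(x,y) : 0 ≤ x ≤ y}`. -/
def Tset : Set (ℝ × ℝ) := {p | 0 ≤ p.1 ∧ p.1 ≤ p.2}

/-- `B = max{b : (a,b) ∈ K}`. -/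
noncomputable def BK (K : Set (ℝ × ℝ)) : ℝ := sSup (Prod.snd '' K)

/-- `m(θ) = max_{(a,b) ∈ K} {ab + θ(b − a)}`. -/
noncomputable def mK (K : Set (ℝ × ℝ)) (θ : ℝ) : ℝ :=
  sSup ((fun p : ℝ × ℝ => p.1 * p.2 + θ * (p.2 - p.1)) '' K)

/-- `F(θ) = max ab` for `θ ≤ 0`, `F(θ) = m(θ)` on `[0,B]`, and `F(θ) = θ²` for `θ ≥ B`. -/
noncomputable def FK (K : Set (ℝ × ℝ)) (θ : ℝ) : ℝ :=
  if θ ≤ 0 then mK K 0 else if θ ≤ BK K then mK K θ else θ ^ 2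

open Set

theorem convexOn_sSup_image {ι E : Type*} [AddCommMonoid E] [Module ℝ E] {s : Set E}
    {K : Set ι} (hne : K.Nonempty) {f : ι → E → ℝ} (hf : ∀ i ∈ K, ConvexOn ℝ s (f i))
    (hs : Convex ℝ s) (hbdd : ∀ x ∈ s, BddAbove ((f · x) '' K)) :
    ConvexOn ℝ s fun x => sSup ((f · x) '' K) := by
  refine ⟨hs, fun x hx y hy a b ha hb hab => csSup_le (hne.image _) ?_⟩
  rintro _ ⟨i, hi, rfl⟩
  calc f i (a • x + b • y) ≤ a • f i x + b • f i y := (hf i hi).2 hx hy ha hb hab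
    _ ≤ a • sSup ((f · x) '' K) + b • sSup ((f · y) '' K) := by
      gcongr
      · exact le_csSup (hbdd x hx) (mem_image_of_mem _ hi)
      · exact le_csSup (hbdd y hy) (mem_image_of_mem _ hi)

theorem convexOn_univ_affine (c d : ℝ) : ConvexOn ℝ univ fun θ : ℝ => c + θ * d :=
  ⟨convex_univ, fun x _ y _ a b _ _ hab => le_of_eq <| by
    simp only [smul_eq_mul]; linear_combination (-c) * hab⟩

/-- `θ²` for `θ ≥ B`, and the tangent line of `θ²` at `B` for `θ ≤ B`. -/
def sqOrTangent (B θ : ℝ) : ℝ := max (θ - B) 0 ^ 2 + (2 * B * θ - B ^ 2)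

theorem sqOrTangent_of_le {B θ : ℝ} (h : θ ≤ B) : sqOrTangent B θ = 2 * B * θ - B ^ 2 := by
  simp [sqOrTangent, max_eq_right (sub_nonpos.2 h)]

theorem sqOrTangent_of_ge {B θ : ℝ} (h : B ≤ θ) : sqOrTangent B θ = θ ^ 2 := by
  rw [sqOrTangent, max_eq_left (sub_nonneg.2 h)]
  ring

theorem convexOn_sqOrTangent (B : ℝ) : ConvexOn ℝ univ (sqOrTangent B) := by
  have hpart : ConvexOn ℝ univ fun θ : ℝ => max (θ - B) 0 :=
    ((convexOn_univ_affine (-B) 1).sup (convexOn_const 0 convex_univ)).congr fun θ _ => by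
      simp only [Pi.sup_apply]; ring_nf
  refine ((hpart.pow (fun θ _ => le_max_right _ _) 2).add
    (convexOn_univ_affine (-B ^ 2) (2 * B))).congr fun θ _ => ?_
  simp only [Pi.add_apply, Pi.pow_apply, sqOrTangent]
  ring

section

variable {K : Set (ℝ × ℝ)}

theorem bddAbove_affine_image (hK : IsCompact K) (θ : ℝ) :
    BddAbove ((fun p : ℝ × ℝ => p.1 * p.2 + θ * (p.2 - p.1)) '' K) :=
  (hK.image (by fun_prop)).bddAbove

theorem le_mK (hK : IsCompact K) {p : ℝ × ℝ} (hp : p ∈ K) (θ : ℝ) :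
    p.1 * p.2 + θ * (p.2 - p.1) ≤ mK K θ :=
  le_csSup (bddAbove_affine_image hK θ) (mem_image_of_mem _ hp)

theorem mK_le (hne : K.Nonempty) {θ c : ℝ} (h : ∀ p ∈ K, p.1 * p.2 + θ * (p.2 - p.1) ≤ c) :
    mK K θ ≤ c :=
  csSup_le (hne.image _) (forall_mem_image.2 h)

theorem convexOn_mK (hK : IsCompact K) (hne : K.Nonempty) : ConvexOn ℝ univ (mK K) :=
  convexOn_sSup_image hne (fun _ _ => convexOn_univ_affine _ _) convex_univ
    fun θ _ => bddAbove_affine_image hK θ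

theorem monotone_mK (hK : IsCompact K) (hne : K.Nonempty) (hT : K ⊆ Tset) : Monotone (mK K) :=
  fun θ₁ θ₂ h => mK_le hne fun p hp => by
    have hba : 0 ≤ p.2 - p.1 := sub_nonneg.2 (hT hp).2
    nlinarith [le_mK hK hp θ₂]

theorem snd_le_BK (hK : IsCompact K) {p : ℝ × ℝ} (hp : p ∈ K) : p.2 ≤ BK K :=
  le_csSup (hK.image continuous_snd).bddAbove (mem_image_of_mem _ hp)

theorem exists_snd_eq_BK (hK : IsCompact K) (hne : K.Nonempty) : ∃ q ∈ K, q.2 = BK K :=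
  (hK.image continuous_snd).sSup_mem (hne.image _)

theorem BK_nonneg (hK : IsCompact K) (hne : K.Nonempty) (hT : K ⊆ Tset) : 0 ≤ BK K := by
  obtain ⟨p, hp⟩ := hne
  exact (hT hp).1.trans ((hT hp).2.trans (snd_le_BK hK hp))

theorem sqOrTangent_le_mK (hK : IsCompact K) (hne : K.Nonempty) (hT : K ⊆ Tset) {θ : ℝ}
    (hθ : θ ≤ BK K) : sqOrTangent (BK K) θ ≤ mK K θ := by
  obtain ⟨q, hq, hqB⟩ := exists_snd_eq_BK hK hne
  have ha : 0 ≤ q.1 := (hT hq).1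
  calc sqOrTangent (BK K) θ = 2 * BK K * θ - BK K ^ 2 := sqOrTangent_of_le hθ
    _ ≤ q.1 * q.2 + θ * (q.2 - q.1) := by
      rw [hqB]
      nlinarith [mul_nonneg (add_nonneg ha (BK_nonneg hK hne hT)) (sub_nonneg.2 hθ)]
    _ ≤ mK K θ := le_mK hK hq θ

theorem mK_le_sq (hK : IsCompact K) (hne : K.Nonempty) (hT : K ⊆ Tset) {θ : ℝ}
    (hθ : BK K ≤ θ) : mK K θ ≤ θ ^ 2 :=
  mK_le hne fun p hp => by
    obtain ⟨ha, hab⟩ := hT hp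
    have hbθ := (snd_le_BK hK hp).trans hθ
    nlinarith [mul_nonneg (by linarith : 0 ≤ θ + p.1) (sub_nonneg.2 hbθ)]

theorem FK_eq_sup (hK : IsCompact K) (hne : K.Nonempty) (hT : K ⊆ Tset) :
    FK K = (fun _ => mK K 0) ⊔ mK K ⊔ sqOrTangent (BK K) := by
  funext θ
  simp only [Pi.sup_apply, FK]
  have hmono := monotone_mK hK hne hT
  rcases le_or_gt θ 0 with h0 | h0
  · have hθB : θ ≤ BK K := h0.trans (BK_nonneg hK hne hT)
    rw [if_pos h0, max_eq_left (hmono h0),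
      max_eq_left ((sqOrTangent_le_mK hK hne hT hθB).trans (hmono h0))]
  rw [if_neg h0.not_ge]
  rcases le_or_gt θ (BK K) with hθB | hθB
  · rw [if_pos hθB, max_eq_right (hmono h0.le), max_eq_left (sqOrTangent_le_mK hK hne hT hθB)]
  have hsq := mK_le_sq hK hne hT hθB.le
  rw [if_neg hθB.not_ge, sqOrTangent_of_ge hθB.le,
    max_eq_right (max_le ((hmono h0.le).trans hsq) hsq)]

end

theorem F_convex (K : Set (ℝ × ℝ)) (hK : IsCompact K) (hne : K.Nonempty)
    (hT : K ⊆ Tset) :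
    ConvexOn ℝ Set.univ (FK K) := by
  rw [FK_eq_sup hK hne hT]
  exact ((convexOn_const _ convex_univ).sup (convexOn_mK hK hne)).sup (convexOn_sqOrTangent _)
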